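/- arXiv:2411.02732 — 6 statements merged into one kernel-verified Lean document; each statement's English description precedes it below -/
import Mathlib

section
/- Let N ≥ 1 be an integer. Then (∏_{p ∈ N.primeFactors} p) · #{x ∈ (ℤ/Nℤ) × (ℤ/Nℤ) : addOrderOf x = N} = N · φ(N) · ∏_{p ∈ N.primeFactors} (p + 1), where φ is Euler's totient function. Equivalently, the number of elements of additive order N in (ℤ/Nℤ)² equals N·φ(N)·∏_{p | N}(1 + 1/p). -/
/-!
Both sides are multiplicative in `N`. For coprime `a, b` the Chinese remainder theorem gives
`(ℤ/abℤ)² ≃+ (ℤ/aℤ)² × (ℤ/bℤ)²`, and a pair of elements whose orders divide `a` and `b` has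
order `ab` exactly when the components have orders `a` and `b`. For `N = p ^ (k + 1)` the
elements of order `N` are those not killed by `p ^ k`, and the `p ^ k`-torsion of `(ℤ/Nℤ)²` has
`p ^ k * p ^ k` elements, as the `d`-torsion of a cyclic group of order divisible by `d` has `d`.
-/

open Finset

section Torsion

variable {G : Type*} [AddGroup G] [Fintype G] [DecidableEq G]

theorem IsAddCyclic.card_nsmul_eq_zero_of_dvd [IsAddCyclic G] {d : ℕ}
    (hd : d ∣ Fintype.card G) : #{x : G | d • x = 0} = d := by
  have hd0 : d ≠ 0 := by
    rintro rfl
    exact Fintype.card_ne_zero (zero_dvd_iff.mp hd)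
  rw [← sum_card_addOrderOf_eq_card_nsmul_eq_zero hd0]
  calc ∑ m ∈ d.divisors, #{x : G | addOrderOf x = m}
      = ∑ m ∈ d.divisors, m.totient := sum_congr rfl fun m hm =>
        IsAddCyclic.card_addOrderOf_eq_totient ((Nat.dvd_of_mem_divisors hm).trans hd)
    _ = d := Nat.sum_totient d

theorem card_prod_nsmul_eq_zero {H : Type*} [AddGroup H] [Fintype H] [DecidableEq H] (d : ℕ) :
    #{x : G × H | d • x = 0} = #{x : G | d • x = 0} * #{y : H | d • y = 0} := by
  rw [← card_product, ← filter_product, univ_product_univ]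
  simp only [Prod.ext_iff, Prod.smul_fst, Prod.smul_snd, Prod.fst_zero, Prod.snd_zero]

theorem card_addOrderOf_eq_prime_pow_add_card_nsmul_eq_zero {p k : ℕ} [hp : Fact p.Prime]
    (hG : ∀ x : G, p ^ (k + 1) • x = 0) :
    #{x : G | addOrderOf x = p ^ (k + 1)} + #{x : G | p ^ k • x = 0} = Fintype.card G := by
  rw [← card_univ, ← card_filter_add_card_filter_not (s := univ) (fun x : G => p ^ k • x = 0),
    add_comm]
  congr 2
  refine filter_congr fun x _ => ⟨fun hx hk => ?_, fun hk => addOrderOf_eq_prime_pow hk (hG x)⟩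
  have := Nat.le_of_dvd (pow_pos hp.out.pos k) (hx ▸ addOrderOf_dvd_of_nsmul_eq_zero hk)
  exact (Nat.pow_lt_pow_right hp.out.one_lt k.lt_succ_self).not_ge this

end Torsion

theorem Prod.addOrderOf_eq_mul_iff {A B : Type*} [AddMonoid A] [AddMonoid B] {m n : ℕ}
    (hmn : m.Coprime n) {x : A × B} (h₁ : addOrderOf x.1 ∣ m) (h₂ : addOrderOf x.2 ∣ n) :
    addOrderOf x = m * n ↔ addOrderOf x.1 = m ∧ addOrderOf x.2 = n := by
  rw [Prod.addOrderOf, ((hmn.coprime_dvd_left h₁).coprime_dvd_right h₂).lcm_eq_mul]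
  refine ⟨fun h => ⟨h₁.antisymm ?_, h₂.antisymm ?_⟩, fun ⟨h₁, h₂⟩ => h₁ ▸ h₂ ▸ rfl⟩
  · exact (hmn.coprime_dvd_right h₂).dvd_of_dvd_mul_right (h ▸ dvd_mul_right m n)
  · exact (hmn.symm.coprime_dvd_right h₁).dvd_of_dvd_mul_left (h ▸ dvd_mul_left n m)

theorem ZModModule.addOrderOf_dvd (n : ℕ) {M : Type*} [AddCommGroup M] [Module (ZMod n) M]
    (x : M) : addOrderOf x ∣ n :=
  addOrderOf_dvd_of_nsmul_eq_zero (ZModModule.char_nsmul_eq_zero n x)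

namespace ZMod

theorem card_prod_nsmul_eq_zero {n d : ℕ} [NeZero n] (hd : d ∣ n) :
    #{x : ZMod n × ZMod n | d • x = 0} = d * d := by
  rw [_root_.card_prod_nsmul_eq_zero, IsAddCyclic.card_nsmul_eq_zero_of_dvd (by rwa [card])]

theorem card_prod_addOrderOf_eq_prime_pow {p k : ℕ} [Fact p.Prime] :
    Nat.card {x : ZMod (p ^ (k + 1)) × ZMod (p ^ (k + 1)) // addOrderOf x = p ^ (k + 1)}
      + p ^ k * p ^ k = p ^ (k + 1) * p ^ (k + 1) := by
  rw [Nat.card_eq_fintype_card, Fintype.card_subtype,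
    ← card_prod_nsmul_eq_zero (pow_dvd_pow p k.le_succ),
    card_addOrderOf_eq_prime_pow_add_card_nsmul_eq_zero (ZModModule.char_nsmul_eq_zero _),
    Fintype.card_prod, card]

theorem card_prod_addOrderOf_eq_mul {a b : ℕ} (hab : a.Coprime b) :
    Nat.card {x : ZMod (a * b) × ZMod (a * b) // addOrderOf x = a * b} =
      Nat.card {x : ZMod a × ZMod a // addOrderOf x = a} *
        Nat.card {y : ZMod b × ZMod b // addOrderOf y = b} := by
  let e : ZMod (a * b) ≃+ ZMod a × ZMod b := (chineseRemainder hab).toAddEquiv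
  let F := (e.prodCongr e).trans (AddEquiv.prodProdProdComm _ _ _ _)
  rw [← Nat.card_prod]
  refine Nat.card_congr ((F.toEquiv.subtypeEquiv fun x => ?_).trans
    (Equiv.subtypeProdEquivProd (p := fun x => addOrderOf x = a)
      (q := fun y => addOrderOf y = b)))
  rw [AddEquiv.toEquiv_eq_coe, AddEquiv.coe_toEquiv, ← AddEquiv.addOrderOf_eq F x]
  exact Prod.addOrderOf_eq_mul_iff hab (ZModModule.addOrderOf_dvd a _)
    (ZModModule.addOrderOf_dvd b _)

end ZMod

theorem count_order_N_elements (N : ℕ) (hN : 1 ≤ N) :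
    (∏ p ∈ N.primeFactors, p) *
      Nat.card {x : ZMod N × ZMod N // addOrderOf x = N} =
      N * N.totient * ∏ p ∈ N.primeFactors, (p + 1) := by
  induction N using Nat.recOnPosPrimePosCoprime with
  | zero => omega
  | one => simp
  | prime_pow p k hp hk =>
    have := Fact.mk hp
    obtain ⟨k, rfl⟩ := Nat.exists_eq_add_of_lt hk
    have hcount := ZMod.card_prod_addOrderOf_eq_prime_pow (p := p) (k := k)
    rw [Nat.primeFactors_prime_pow hk.ne' hp, prod_singleton, prod_singleton,
      zero_add, Nat.totient_prime_pow_succ hp]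
    zify [hp.one_le] at hcount ⊢
    linear_combination (p : ℤ) * hcount
  | coprime a b ha hb hab iha ihb =>
    have hdisj := hab.disjoint_primeFactors
    rw [Nat.primeFactors_mul (by omega) (by omega), prod_union hdisj, prod_union hdisj,
      ZMod.card_prod_addOrderOf_eq_mul hab, Nat.totient_mul hab, mul_mul_mul_comm,
      iha (by omega), ihb (by omega)]
    ring
end

section
/- Let N ≥ 1 be an integer. Then (∏_{p ∈ N.primeFactors} p) · #{H : H is an additive subgroup of (ℤ/Nℤ) × (ℤ/Nℤ), H is cyclic (H = zmultiples x for some x) and Nat.card H = N} = N · ∏_{p ∈ N.primeFactors} (p + 1). Equivalently, the number of cyclic subgroups of order N of (ℤ/Nℤ)² equals N·∏_{p | N}(1 + 1/p). -/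
/-!
Each element of order `N` of `(ℤ/Nℤ)²` generates a cyclic subgroup of order `N`, and each such
subgroup has exactly `φ N` generators; so `φ N` times the number of subgroups is the number
`J₂ N` of elements of order `N`. The Chinese remainder theorem makes `J₂` multiplicative, and
for `q = p ^ (k + 1)` an element of `(ℤ/qℤ)²` has order less than `q` exactly when `p ^ k` kills
both coordinates, so `J₂ q = q² - p ^ (2 k)`. Comparing with Euler's `φ N ∏ p = N ∏ (p - 1)`
gives the formula.
-/

open AddSubgroup Nat

section CyclicSubgroups

variable {G : Type*} [AddGroup G]

lemma AddSubgroup.zmultiples_eq_iff_mem {H : AddSubgroup G} [Finite H] {y : G}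
    (hy : addOrderOf y = Nat.card H) : zmultiples y = H ↔ y ∈ H :=
  ⟨fun h ↦ h ▸ mem_zmultiples y, fun h ↦
    eq_of_le_of_card_ge (zmultiples_le.2 h) (by rw [Nat.card_zmultiples, hy])⟩

lemma AddSubgroup.card_addOrderOf_eq_totient_of_eq_zmultiples {H : AddSubgroup G} {x : G}
    (hx : H = zmultiples x) [Finite H] :
    Nat.card {y : H // addOrderOf y = Nat.card H} = φ (Nat.card H) := by
  classical
  have : IsAddCyclic H := hx ▸ isAddCyclic_zmultiples x
  have := Fintype.ofFinite H
  rw [Nat.card_eq_fintype_card, Fintype.card_subtype, Nat.card_eq_fintype_card]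
  exact IsAddCyclic.card_addOrderOf_eq_totient dvd_rfl

theorem card_addOrderOf_eq_card_cyclic_mul_totient [Finite G] (n : ℕ) :
    Nat.card {x : G // addOrderOf x = n} =
      Nat.card {H : AddSubgroup G // (∃ x, H = zmultiples x) ∧ Nat.card H = n} * φ n := by
  set C := {H : AddSubgroup G // (∃ x, H = zmultiples x) ∧ Nat.card H = n}
  let gen : {x : G // addOrderOf x = n} → C := fun x ↦
    ⟨zmultiples x.1, ⟨x.1, rfl⟩, by rw [Nat.card_zmultiples, x.2]⟩
  have gen_eq_iff (x : {x : G // addOrderOf x = n}) (H : C) : gen x = H ↔ x.1 ∈ H.1 := by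
    rw [← zmultiples_eq_iff_mem (x.2.trans H.2.2.symm), Subtype.ext_iff]
  have fiber (H : C) : {x // gen x = H} ≃ {y : H.1 // addOrderOf y = n} :=
    { toFun x := ⟨⟨x.1.1, (gen_eq_iff _ _).1 x.2⟩, (addOrderOf_mk _ _).trans x.1.2⟩
      invFun y := ⟨⟨y.1.1, (addOrderOf_coe _).trans y.2⟩, (gen_eq_iff _ _).2 y.1.2⟩
      left_inv _ := rfl
      right_inv _ := rfl }
  have := Fintype.ofFinite C
  calc Nat.card {x : G // addOrderOf x = n}
      = ∑ H : C, Nat.card {y : H.1 // addOrderOf y = n} := by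
        rw [← Nat.card_congr (Equiv.sigmaFiberEquiv gen), Nat.card_sigma]
        exact Finset.sum_congr rfl fun H _ ↦ Nat.card_congr (fiber H)
    _ = Nat.card C * φ n := by
        rw [Finset.sum_congr rfl fun H _ ↦ ?_, Finset.sum_const, Finset.card_univ,
          smul_eq_mul, Nat.card_eq_fintype_card]
        obtain ⟨⟨x, hx⟩, hcard⟩ := H.2
        simpa only [hcard] using card_addOrderOf_eq_totient_of_eq_zmultiples hx

end CyclicSubgroups

lemma Nat.card_subtype_add_card_subtype_not {α : Type*} [Finite α] (P : α → Prop) :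
    Nat.card {x // P x} + Nat.card {x // ¬P x} = Nat.card α := by
  classical
  rw [← Nat.card_sum, Nat.card_congr (Equiv.sumCompl P)]

section OrderInProduct

variable {α β : Type*} [AddMonoid α] [AddMonoid β]

lemma Prod.addOrderOf_eq_mul_iff_of_coprime {a b : ℕ} (hab : a.Coprime b) {x : α × β}
    (hx₁ : a • x.1 = 0) (hx₂ : b • x.2 = 0) :
    addOrderOf x = a * b ↔ addOrderOf x.1 = a ∧ addOrderOf x.2 = b := by
  have h₁ := addOrderOf_dvd_of_nsmul_eq_zero hx₁
  have h₂ := addOrderOf_dvd_of_nsmul_eq_zero hx₂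
  rw [Prod.addOrderOf, ((hab.coprime_dvd_left h₁).coprime_dvd_right h₂).lcm_eq_mul]
  refine ⟨fun h ↦ ⟨h₁.antisymm ?_, h₂.antisymm ?_⟩, fun ⟨h₁, h₂⟩ ↦ h₁ ▸ h₂ ▸ rfl⟩
  · exact (hab.coprime_dvd_right h₂).dvd_of_dvd_mul_right (h ▸ dvd_mul_right a b)
  · exact (hab.symm.coprime_dvd_right h₁).dvd_of_dvd_mul_left (h ▸ dvd_mul_left b a)

lemma Prod.card_addOrderOf_eq_mul_of_coprime {a b : ℕ} (hab : a.Coprime b)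
    (hα : ∀ x : α, a • x = 0) (hβ : ∀ y : β, b • y = 0) :
    Nat.card {x : α × β // addOrderOf x = a * b} =
      Nat.card {x : α // addOrderOf x = a} * Nat.card {y : β // addOrderOf y = b} := by
  rw [← Nat.card_prod]
  exact Nat.card_congr <| (Equiv.subtypeEquivRight fun x ↦
    addOrderOf_eq_mul_iff_of_coprime hab (hα x.1) (hβ x.2)).trans
    (Equiv.subtypeProdEquivProd (p := (addOrderOf · = a)) (q := (addOrderOf · = b)))

end OrderInProduct

section PrimePower

variable {p k : ℕ} [Fact p.Prime]

lemma addOrderOf_eq_prime_pow_succ_iff {G : Type*} [AddMonoid G] {x : G}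
    (hx : p ^ (k + 1) • x = 0) : addOrderOf x = p ^ (k + 1) ↔ p ^ k • x ≠ 0 := by
  have hp := (Fact.out : p.Prime)
  refine ⟨fun h ↦ nsmul_ne_zero_of_lt_addOrderOf (pow_ne_zero k hp.ne_zero) ?_,
    fun h ↦ addOrderOf_eq_prime_pow h hx⟩
  exact h ▸ Nat.pow_lt_pow_right hp.one_lt k.lt_succ_self

lemma ZMod.card_nsmul_eq_zero_prime_pow_succ :
    Nat.card {a : ZMod (p ^ (k + 1)) // p ^ k • a = 0} = p ^ k := by
  classical
  have hp := (Fact.out : p.Prime)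
  have hgen :
      Nat.card {a : ZMod (p ^ (k + 1)) // addOrderOf a = p ^ (k + 1)} = p ^ k * (p - 1) := by
    rw [← totient_prime_pow_succ hp, Nat.card_eq_fintype_card, Fintype.card_subtype]
    exact IsAddCyclic.card_addOrderOf_eq_totient (by rw [ZMod.card])
  have hsum := Nat.card_subtype_add_card_subtype_not fun a : ZMod (p ^ (k + 1)) ↦ p ^ k • a = 0
  rw [Nat.card_congr (Equiv.subtypeEquivRight fun a ↦
    (addOrderOf_eq_prime_pow_succ_iff (ZModModule.char_nsmul_eq_zero _ a)).symm), hgen,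
    Nat.card_zmod] at hsum
  zify [hp.one_le] at hsum ⊢
  linear_combination hsum

end PrimePower

/-- Jordan's totient `J₂ n = n² ∏_{p ∣ n} (1 - 1/p²)`. -/
noncomputable def jordanTotientTwo (n : ℕ) : ℕ :=
  Nat.card {x : ZMod n × ZMod n // addOrderOf x = n}

lemma jordanTotientTwo_mul {a b : ℕ} (hab : a.Coprime b) :
    jordanTotientTwo (a * b) = jordanTotientTwo a * jordanTotientTwo b := by
  let e : ZMod (a * b) ≃+ ZMod a × ZMod b := (ZMod.chineseRemainder hab).toAddEquiv
  let e₂ := (e.prodCongr e).trans (AddEquiv.prodProdProdComm _ _ _ _)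
  rw [jordanTotientTwo, jordanTotientTwo, jordanTotientTwo,
    ← Prod.card_addOrderOf_eq_mul_of_coprime hab
      (ZModModule.char_nsmul_eq_zero a) (ZModModule.char_nsmul_eq_zero b)]
  exact Nat.card_congr (e₂.toEquiv.subtypeEquiv fun x ↦ by simp)

lemma jordanTotientTwo_prime_pow_succ {p k : ℕ} [Fact p.Prime] :
    jordanTotientTwo (p ^ (k + 1)) + (p ^ k) ^ 2 = (p ^ (k + 1)) ^ 2 := by
  set q := p ^ (k + 1)
  have hcompl : {x : ZMod q × ZMod q // ¬addOrderOf x = q} ≃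
      {a : ZMod q // p ^ k • a = 0} × {a : ZMod q // p ^ k • a = 0} :=
    (Equiv.subtypeEquivRight fun x ↦ by
      rw [addOrderOf_eq_prime_pow_succ_iff (ZModModule.char_nsmul_eq_zero _ x), not_not,
        Prod.ext_iff, Prod.smul_fst, Prod.smul_snd, Prod.fst_zero, Prod.snd_zero]).trans
      (Equiv.subtypeProdEquivProd (p := (p ^ k • · = 0)) (q := (p ^ k • · = 0)))
  have hsum := Nat.card_subtype_add_card_subtype_not fun x : ZMod q × ZMod q ↦ addOrderOf x = q
  rwa [Nat.card_congr hcompl, Nat.card_prod, ZMod.card_nsmul_eq_zero_prime_pow_succ,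
    Nat.card_prod, Nat.card_zmod, ← sq, ← sq] at hsum

lemma jordanTotientTwo_mul_prod_primeFactors {n : ℕ} (hn : 0 < n) :
    jordanTotientTwo n * ∏ p ∈ n.primeFactors, p =
      φ n * (n * ∏ p ∈ n.primeFactors, (p + 1)) := by
  induction n using Nat.recOnPosPrimePosCoprime with
  | zero => exact absurd hn (lt_irrefl 0)
  | one => simp [jordanTotientTwo]
  | prime_pow p e hp he =>
    have := Fact.mk hp
    obtain ⟨k, rfl⟩ := Nat.exists_eq_add_of_lt he
    have hJ := jordanTotientTwo_prime_pow_succ (p := p) (k := k)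
    rw [zero_add, primeFactors_prime_pow k.succ_ne_zero hp, Finset.prod_singleton,
      Finset.prod_singleton, totient_prime_pow_succ hp]
    zify [hp.one_le] at hJ ⊢
    linear_combination (p : ℤ) * hJ
  | coprime a b ha hb hab iha ihb =>
    rw [primeFactors_mul (by omega) (by omega), Finset.prod_union hab.disjoint_primeFactors,
      Finset.prod_union hab.disjoint_primeFactors, jordanTotientTwo_mul hab, totient_mul hab,
      mul_mul_mul_comm, iha (by omega), ihb (by omega)]
    ring

theorem count_cyclic_subgroups_order_N (N : ℕ) (hN : 1 ≤ N) :
    (∏ p ∈ N.primeFactors, p) *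
      Nat.card {H : AddSubgroup (ZMod N × ZMod N) //
        (∃ x, H = AddSubgroup.zmultiples x) ∧ Nat.card H = N} =
      N * ∏ p ∈ N.primeFactors, (p + 1) := by
  have : NeZero N := ⟨by omega⟩
  have hJ := jordanTotientTwo_mul_prod_primeFactors hN
  rw [jordanTotientTwo, card_addOrderOf_eq_card_cyclic_mul_totient] at hJ
  exact Nat.eq_of_mul_eq_mul_left (totient_pos.2 hN) (by rw [← hJ]; ring)
end

section
/- Let p be a prime, e ≥ 1 an integer, and let P be an element of the (ℤ/p^eℤ)-module M = (ℤ/p^eℤ) × (ℤ/p^eℤ) with addOrderOf P = p^e. Then the number of elements Q of M such that {P, Q} spans M as a (ℤ/p^eℤ)-module is p^e · φ(p^e) = p^(2e−1)·(p − 1). In Lean terms: Nat.card {Q : ZMod (p^e) × ZMod (p^e) // Submodule.span (ZMod (p^e)) {P, Q} = ⊤} = p^e * (p^e).totient. -/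
/-!
A pair `P, Q` spans `R × R` exactly when the determinant `P.1 * Q.2 - P.2 * Q.1` is a unit.
In `ZMod (p ^ e)` the non-units are the multiples of `p`, so a point of order `p ^ e` has a unit
coordinate; then `Q ↦ (Q.1, det (P, Q))` (or its mirror image) is a bijection of `R × R`, and the
admissible `Q` correspond to `R × Rˣ`, giving `p ^ e * φ (p ^ e)` of them.
-/

section PairDet

variable {R : Type*} [CommRing R]

def pairDet (P Q : R × R) : R := P.1 * Q.2 - P.2 * Q.1

lemma pairDet_swap (P Q : R × R) : pairDet P.swap Q.swap = -pairDet P Q := by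
  simp only [pairDet, Prod.fst_swap, Prod.snd_swap]
  ring

lemma span_pair_eq_top_iff_isUnit_pairDet (P Q : R × R) :
    Submodule.span R {P, Q} = ⊤ ↔ IsUnit (pairDet P Q) := by
  constructor
  · intro h
    have hmem (v : R × R) : v ∈ Submodule.span R {P, Q} := h ▸ Submodule.mem_top
    obtain ⟨x, y, hxy⟩ := Submodule.mem_span_pair.mp (hmem (1, 0))
    obtain ⟨z, w, hzw⟩ := Submodule.mem_span_pair.mp (hmem (0, 1))
    simp only [Prod.ext_iff, Prod.fst_add, Prod.snd_add, Prod.smul_fst, Prod.smul_snd,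
      smul_eq_mul] at hxy hzw
    -- the coefficient matrix `[[x, y], [z, w]]` is a right inverse of `[[P.1, Q.1], [P.2, Q.2]]`
    refine IsUnit.of_mul_eq_one (x * w - y * z) ?_
    unfold pairDet
    linear_combination (z * P.2 + w * Q.2) * hxy.1 + hzw.2 - (z * P.1 + w * Q.1) * hxy.2
  · rintro ⟨u, hu⟩
    -- Cramer's rule
    refine eq_top_iff.mpr fun v _ => Submodule.mem_span_pair.mpr
      ⟨↑u⁻¹ * (v.1 * Q.2 - v.2 * Q.1), ↑u⁻¹ * (v.2 * P.1 - v.1 * P.2), ?_⟩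
    have hinv : (↑u⁻¹ : R) * pairDet P Q = 1 := by rw [← hu, Units.inv_mul]
    simp only [pairDet] at hinv
    ext
    · simp only [Prod.fst_add, Prod.smul_fst, smul_eq_mul]
      linear_combination v.1 * hinv
    · simp only [Prod.snd_add, Prod.smul_snd, smul_eq_mul]
      linear_combination v.2 * hinv

lemma card_isUnit_pairDet_of_isUnit_fst {P : R × R} (hP : IsUnit P.1) :
    Nat.card {Q : R × R // IsUnit (pairDet P Q)} = Nat.card R * Nat.card Rˣ := by
  obtain ⟨w, hw⟩ := hP
  have hdet (t d : R) : pairDet P (t, ↑w⁻¹ * (d + P.2 * t)) = d := by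
    rw [pairDet, ← hw, Units.mul_inv_cancel_left]
    ring
  rw [← Nat.card_prod]
  exact Nat.card_congr
    { toFun := fun Q => (Q.1.1, Q.2.unit)
      invFun := fun x =>
        ⟨(x.1, (↑w⁻¹ : R) * (x.2 + P.2 * x.1)), by rw [hdet]; exact x.2.isUnit⟩
      left_inv := fun ⟨Q, _⟩ => Subtype.ext <| Prod.ext rfl <| by
        simp only [IsUnit.unit_spec, pairDet, sub_add_cancel, ← hw, Units.inv_mul_cancel_left]
      right_inv := fun ⟨t, d⟩ => Prod.ext rfl <| Units.ext <| hdet t d }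

lemma card_isUnit_pairDet {P : R × R} (hP : IsUnit P.1 ∨ IsUnit P.2) :
    Nat.card {Q : R × R // IsUnit (pairDet P Q)} = Nat.card R * Nat.card Rˣ := by
  rcases hP with hP | hP
  · exact card_isUnit_pairDet_of_isUnit_fst hP
  · rw [← card_isUnit_pairDet_of_isUnit_fst (P := P.swap) hP]
    refine Nat.card_congr ((Equiv.prodComm R R).subtypeEquiv fun Q => ?_)
    rw [Equiv.prodComm_apply, pairDet_swap, IsUnit.neg_iff]

end PairDet

lemma ZMod.pow_pred_mul_eq_zero_of_not_isUnit {p e : ℕ} (hp : p.Prime) (he : 0 < e)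
    {a : ZMod (p ^ e)} (ha : ¬IsUnit a) : (p : ZMod (p ^ e)) ^ (e - 1) * a = 0 := by
  have : NeZero (p ^ e) := ⟨pow_ne_zero e hp.ne_zero⟩
  rw [← ZMod.natCast_zmod_val a, ZMod.isUnit_natCast_iff_not_dvd_pow hp he, not_not] at ha
  obtain ⟨c, hc⟩ := ha
  rw [← ZMod.natCast_zmod_val a, hc, ← Nat.cast_pow, ← Nat.cast_mul, ZMod.natCast_eq_zero_iff,
    ← mul_assoc, ← pow_succ, Nat.sub_add_cancel he]
  exact dvd_mul_right _ _

lemma isUnit_fst_or_snd_of_addOrderOf_eq {p e : ℕ} (hp : p.Prime) (he : 0 < e)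
    {P : ZMod (p ^ e) × ZMod (p ^ e)} (hP : addOrderOf P = p ^ e) : IsUnit P.1 ∨ IsUnit P.2 := by
  by_contra! h
  have hkill : p ^ (e - 1) • P = 0 := by
    ext
    · simpa [nsmul_eq_mul] using ZMod.pow_pred_mul_eq_zero_of_not_isUnit hp he h.1
    · simpa [nsmul_eq_mul] using ZMod.pow_pred_mul_eq_zero_of_not_isUnit hp he h.2
  have hdvd := hP ▸ addOrderOf_dvd_of_nsmul_eq_zero hkill
  have := (Nat.pow_dvd_pow_iff_le_right hp.one_lt).mp hdvd
  omega

theorem count_second_basis_vector (p : ℕ) (hp : p.Prime) (e : ℕ) (he : 1 ≤ e)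
    (P : ZMod (p ^ e) × ZMod (p ^ e)) (hP : addOrderOf P = p ^ e) :
    Nat.card {Q : ZMod (p ^ e) × ZMod (p ^ e) //
      Submodule.span (ZMod (p ^ e)) {P, Q} = ⊤} = p ^ e * (p ^ e).totient := by
  have : NeZero (p ^ e) := ⟨pow_ne_zero e hp.ne_zero⟩
  calc Nat.card {Q : ZMod (p ^ e) × ZMod (p ^ e) // Submodule.span (ZMod (p ^ e)) {P, Q} = ⊤}
      = Nat.card {Q : ZMod (p ^ e) × ZMod (p ^ e) // IsUnit (pairDet P Q)} :=
        Nat.card_congr (Equiv.subtypeEquivRight (span_pair_eq_top_iff_isUnit_pairDet P))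
    _ = Nat.card (ZMod (p ^ e)) * Nat.card (ZMod (p ^ e))ˣ :=
        card_isUnit_pairDet (isUnit_fst_or_snd_of_addOrderOf_eq hp he hP)
    _ = p ^ e * (p ^ e).totient := by
        rw [Nat.card_zmod, Nat.card_eq_fintype_card, ZMod.card_units_eq_totient]
end

section
/- Let N > 2 be an integer, let T = {x ∈ (ℤ/Nℤ) × (ℤ/Nℤ) : addOrderOf x = N}, and let s be any setoid (equivalence relation) on T such that a ≈ b if and only if a = b or a = −b (as elements of (ℤ/Nℤ)²). Then 2 · (∏_{p ∈ N.primeFactors} p) · Nat.card (Quotient s) = N · φ(N) · ∏_{p ∈ N.primeFactors} (p + 1). Equivalently, the number of elements of order N in (ℤ/Nℤ)² taken up to sign equals N·φ(N)·∏_{p | N}(1 + 1/p) / 2. -/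
/-!
A point of order `N > 2` is never its own negative, so every class `{x, -x}` has two elements
and it suffices to count the points of order `N` in `(ℤ/N)²`. By the Chinese remainder theorem
this count is multiplicative in `N`. For `N = p ^ (k + 1)` a point fails to have order `N` exactly
when `p ^ k` kills it, and the `p ^ k`-torsion of `(ℤ/N)²` has `p ^ (2k)` points, so the count is
`p ^ (2k + 2) - p ^ (2k) = N φ(N) (1 + 1/p)`.
-/

open Finset

theorem IsAddCyclic.card_nsmul_eq_zero {α : Type*} [AddGroup α] [Finite α] [IsAddCyclic α]
    {d : ℕ} (hd : d ∣ Nat.card α) : Nat.card {a : α // d • a = 0} = d := by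
  classical
  have := Fintype.ofFinite α
  have hd0 : d ≠ 0 := ne_zero_of_dvd_ne_zero Nat.card_pos.ne' hd
  rw [Nat.card_eq_fintype_card, Fintype.card_subtype]
  calc #{a : α | d • a = 0}
      = ∑ m ∈ d.divisors, #{a : α | addOrderOf a = m} := by
        rw [sum_card_addOrderOf_eq_card_nsmul_eq_zero hd0]
    _ = ∑ m ∈ d.divisors, m.totient := sum_congr rfl fun m hm => by
        refine IsAddCyclic.card_addOrderOf_eq_totient ?_
        rw [← Nat.card_eq_fintype_card]
        exact (Nat.dvd_of_mem_divisors hm).trans hd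
    _ = d := Nat.sum_totient d

theorem Prod.card_nsmul_eq_zero {A B : Type*} [AddMonoid A] [AddMonoid B] (d : ℕ) :
    Nat.card {x : A × B // d • x = 0} =
      Nat.card {a : A // d • a = 0} * Nat.card {b : B // d • b = 0} := by
  rw [← Nat.card_prod]
  exact Nat.card_congr <|
    (Equiv.subtypeEquivRight fun x => by simp [Prod.ext_iff]).trans Equiv.subtypeProdEquivProd

theorem addOrderOf_eq_prime_pow_iff {G : Type*} [AddMonoid G] {x : G} {p k : ℕ}
    [hp : Fact p.Prime] (hx : p ^ (k + 1) • x = 0) : addOrderOf x = p ^ (k + 1) ↔ ¬p ^ k • x = 0 := by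
  refine ⟨fun h hk => ?_, fun h => addOrderOf_eq_prime_pow h hx⟩
  have := h ▸ addOrderOf_dvd_of_nsmul_eq_zero hk
  rw [Nat.pow_dvd_pow_iff_le_right hp.out.one_lt] at this
  omega

theorem addOrderOf_mk_eq_mul_iff {A B : Type*} [AddMonoid A] [AddMonoid B] {a : A} {b : B}
    {m n : ℕ} (ha : addOrderOf a ∣ m) (hb : addOrderOf b ∣ n) (hmn : m.Coprime n) :
    addOrderOf (a, b) = m * n ↔ addOrderOf a = m ∧ addOrderOf b = n := by
  rw [Prod.addOrderOf_mk, ((hmn.coprime_dvd_left ha).coprime_dvd_right hb).lcm_eq_mul]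
  refine ⟨fun h => ⟨?_, ?_⟩, fun ⟨ha, hb⟩ => ha ▸ hb ▸ rfl⟩
  · refine Nat.dvd_antisymm ha ((hmn.coprime_dvd_right hb).dvd_of_dvd_mul_right ?_)
    exact h ▸ dvd_mul_right m n
  · refine Nat.dvd_antisymm hb ((hmn.symm.coprime_dvd_right ha).dvd_of_dvd_mul_left ?_)
    exact h ▸ dvd_mul_left n m

theorem Setoid.card_eq_mul_card_quotient {α : Type*} [Finite α] (s : Setoid α) {k : ℕ}
    (hk : ∀ a, Nat.card {b // s b a} = k) : Nat.card α = k * Nat.card (Quotient s) := by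
  have := Fintype.ofFinite (Quotient s)
  rw [Nat.card_congr (Equiv.sigmaFiberEquiv (Quotient.mk s)).symm, Nat.card_sigma,
    Nat.card_eq_fintype_card (α := Quotient s), ← card_univ, mul_comm, ← smul_eq_mul,
    ← sum_const]
  refine sum_congr rfl fun q _ => ?_
  induction q using Quotient.inductionOn with
  | h a => exact (Nat.card_congr (Equiv.subtypeEquivRight fun b => Quotient.eq)).trans (hk a)

theorem card_addOrderOf_eq_two_mul_card_quotient {G : Type*} [AddGroup G] [Finite G] {n : ℕ}
    (hn : 2 < n) (s : Setoid {x : G // addOrderOf x = n})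
    (hs : ∀ a b, s a b ↔ (a : G) = b ∨ (a : G) = -(b : G)) :
    Nat.card {x : G // addOrderOf x = n} = 2 * Nat.card (Quotient s) := by
  refine s.card_eq_mul_card_quotient fun a => ?_
  let a' : {x : G // addOrderOf x = n} := ⟨-a, (addOrderOf_neg _).trans a.2⟩
  have ha : a ≠ a' := fun h => by
    have h2 : 2 • (a : G) = 0 := by
      rw [two_nsmul]; nth_rewrite 1 [congrArg Subtype.val h]; exact neg_add_cancel _
    have := Nat.le_of_dvd two_pos (a.2 ▸ addOrderOf_dvd_of_nsmul_eq_zero h2)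
    omega
  rw [← Set.ncard_pair ha, ← Nat.card_coe_set_eq]
  exact Nat.card_congr (Equiv.subtypeEquivRight fun b => by simp [hs, Subtype.ext_iff, a'])

abbrev ExactOrderPairs (n : ℕ) := {x : ZMod n × ZMod n // addOrderOf x = n}

theorem ZMod.nsmul_prod_self_eq_zero {n : ℕ} (x : ZMod n × ZMod n) : n • x = 0 :=
  Prod.ext (by simp) (by simp)

theorem ZMod.card_prod_nsmul_eq_zero_s8 {n d : ℕ} [NeZero n] (hd : d ∣ n) :
    Nat.card {x : ZMod n × ZMod n // d • x = 0} = d ^ 2 := by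
  have hd' : d ∣ Nat.card (ZMod n) := (Nat.card_zmod n).symm ▸ hd
  rw [Prod.card_nsmul_eq_zero, IsAddCyclic.card_nsmul_eq_zero hd', sq]

theorem card_exactOrderPairs_prime_pow {p : ℕ} [Fact p.Prime] (k : ℕ) :
    Nat.card (ExactOrderPairs (p ^ (k + 1))) + (p ^ k) ^ 2 = (p ^ (k + 1)) ^ 2 := by
  have hcompl : Nat.card {x : ZMod (p ^ (k + 1)) × ZMod (p ^ (k + 1)) //
      ¬addOrderOf x = p ^ (k + 1)} = (p ^ k) ^ 2 := by
    rw [← ZMod.card_prod_nsmul_eq_zero_s8 (pow_dvd_pow p k.le_succ)]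
    exact Nat.card_congr <| Equiv.subtypeEquivRight fun x => by
      rw [addOrderOf_eq_prime_pow_iff (ZMod.nsmul_prod_self_eq_zero x), not_not]
  rw [← hcompl, ← Nat.card_sum, Nat.card_congr (Equiv.sumCompl _), Nat.card_prod, Nat.card_zmod,
    sq]

theorem card_exactOrderPairs_mul {m n : ℕ} (hmn : m.Coprime n) :
    Nat.card (ExactOrderPairs (m * n)) =
      Nat.card (ExactOrderPairs m) * Nat.card (ExactOrderPairs n) := by
  let crt := (ZMod.chineseRemainder hmn).toAddEquiv
  let E : ZMod (m * n) × ZMod (m * n) ≃+ (ZMod m × ZMod m) × (ZMod n × ZMod n) :=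
    (crt.prodCongr crt).trans (AddEquiv.prodProdProdComm _ _ _ _)
  have hE (x : ZMod (m * n) × ZMod (m * n)) :
      addOrderOf x = m * n ↔ addOrderOf (E x) = m * n := by
    rw [E.addOrderOf_eq]
  have hsplit (y : (ZMod m × ZMod m) × (ZMod n × ZMod n)) :
      addOrderOf y = m * n ↔ addOrderOf y.1 = m ∧ addOrderOf y.2 = n :=
    addOrderOf_mk_eq_mul_iff (addOrderOf_dvd_of_nsmul_eq_zero (ZMod.nsmul_prod_self_eq_zero _))
      (addOrderOf_dvd_of_nsmul_eq_zero (ZMod.nsmul_prod_self_eq_zero _)) hmn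
  rw [← Nat.card_prod]
  exact Nat.card_congr <| (E.toEquiv.subtypeEquiv hE).trans
    ((Equiv.subtypeEquivRight hsplit).trans <| Equiv.subtypeProdEquivProd
      (p := fun x : ZMod m × ZMod m => addOrderOf x = m) (q := fun x => addOrderOf x = n))

theorem card_exactOrderPairs_mul_prod_primeFactors {n : ℕ} (hn : n ≠ 0) :
    Nat.card (ExactOrderPairs n) * ∏ p ∈ n.primeFactors, p =
      n * n.totient * ∏ p ∈ n.primeFactors, (p + 1) := by
  induction n using Nat.recOnPosPrimePosCoprime with
  | zero => contradiction
  | one =>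
    rw [Nat.card_eq_one_iff_unique (α := ExactOrderPairs 1) |>.mpr
      ⟨inferInstance, ⟨⟨0, addOrderOf_zero⟩⟩⟩]
    simp
  | prime_pow p k hp hk =>
    have := Fact.mk hp
    obtain ⟨k, rfl⟩ := Nat.exists_eq_add_one_of_ne_zero hk.ne'
    have hcard := card_exactOrderPairs_prime_pow (p := p) k
    rw [Nat.primeFactors_prime_pow k.succ_ne_zero hp, prod_singleton, prod_singleton,
      Nat.totient_prime_pow_succ hp]
    zify [hp.one_le] at hcard ⊢
    linear_combination (p : ℤ) * hcard
  | coprime a b ha hb hab iha ihb =>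
    rw [card_exactOrderPairs_mul hab, Nat.totient_mul hab, hab.primeFactors_mul,
      prod_union hab.disjoint_primeFactors, prod_union hab.disjoint_primeFactors]
    calc _ = (Nat.card (ExactOrderPairs a) * ∏ p ∈ a.primeFactors, p) *
          (Nat.card (ExactOrderPairs b) * ∏ p ∈ b.primeFactors, p) := by ring
      _ = _ := by rw [iha (by omega), ihb (by omega)]; ring

theorem count_order_N_up_to_sign (N : ℕ) (hN : 2 < N)
    (s : Setoid {x : ZMod N × ZMod N // addOrderOf x = N})
    (hs : ∀ a b, s.r a b ↔
      ((a : ZMod N × ZMod N) = b ∨ (a : ZMod N × ZMod N) = -(b : ZMod N × ZMod N))) :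
    2 * (∏ p ∈ N.primeFactors, p) * Nat.card (Quotient s) =
      N * N.totient * ∏ p ∈ N.primeFactors, (p + 1) := by
  have := NeZero.of_pos (by omega : 0 < N)
  rw [← card_exactOrderPairs_mul_prod_primeFactors (by omega),
    card_addOrderOf_eq_two_mul_card_quotient hN s hs]
  ring
end

section
/- Let R be a Dedekind domain, let P, N ∈ R with N ≠ 0, let 𝔞 = span{P, N} be the ideal generated by P and N, and let 𝔟 be an ideal of R with 𝔞 · 𝔟 = span{N}. Then the colon ideal (span{N} : span{P}) = {x ∈ R : x·P ∈ (N)} equals 𝔟. In Lean terms: (Ideal.span {N}).colon (Ideal.span {P}) = 𝔟. -/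
theorem colon_eq_of_mul_eq_span {R : Type*} [CommRing R] [IsDomain R] [IsDedekindDomain R]
    (P N : R) (hN : N ≠ 0) (𝔟 : Ideal R)
    (h : Ideal.span {P, N} * 𝔟 = Ideal.span {N}) :
    (Ideal.span ({N} : Set R)).colon (Ideal.span {P}) = 𝔟 := by
  have ha0 : Ideal.span ({P, N} : Set R) ≠ 0 := by
    intro h0
    have hNmem : N ∈ Ideal.span ({P, N} : Set R) :=
      Ideal.subset_span (by simp)
    rw [h0] at hNmem
    exact hN (by simpa using hNmem)
  ext x
  simp only [Ideal.mem_colon_span_singleton, Ideal.mem_span_singleton]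
  constructor
  · intro hxP
    -- x * 𝔞 ⊆ (N) = 𝔞 * 𝔟
    have hle : Ideal.span {x} * Ideal.span ({P, N} : Set R) ≤ Ideal.span ({P, N} : Set R) * 𝔟 := by
      rw [h, Ideal.span_singleton_mul_le_iff]
      intro z hz
      rw [Ideal.mem_span_singleton]
      have : Ideal.span ({P, N} : Set R) ≤ Ideal.span {P} ⊔ Ideal.span {N} := by
        rw [← Ideal.span_union, ← Set.insert_eq]
      rcases Submodule.mem_sup.mp (this hz) with ⟨a, ha, b, hb, rfl⟩
      rw [Ideal.mem_span_singleton] at ha hb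
      obtain ⟨c, rfl⟩ := ha
      obtain ⟨d, rfl⟩ := hb
      obtain ⟨e, he⟩ := hxP
      exact ⟨e * c + x * d, by rw [mul_add, ← mul_assoc, mul_comm x P, mul_comm P, he]; ring⟩
    have hdvd : Ideal.span ({P, N} : Set R) * 𝔟 ∣ Ideal.span {x} * Ideal.span ({P, N} : Set R) :=
      Ideal.dvd_iff_le.mpr hle
    rw [mul_comm (Ideal.span {x})] at hdvd
    have : 𝔟 ∣ Ideal.span {x} := (mul_dvd_mul_iff_left ha0).mp hdvd
    have := Ideal.le_of_dvd this
    exact this (Ideal.mem_span_singleton_self x)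
  · intro hx
    have : x * P ∈ Ideal.span ({P, N} : Set R) * 𝔟 := by
      rw [mul_comm]
      exact Ideal.mul_mem_mul hx (Ideal.subset_span (by simp))
    rw [h, Ideal.mem_span_singleton] at this
    exact this
end

section
/- Let R be a Dedekind domain, let P, N ∈ R with N ≠ 0, let 𝔞 = span{P, N}, and let 𝔟 be an ideal of R with 𝔞 · 𝔟 = span{N}. Then for every α ∈ R: ((α − 1)·P ∈ span{N} or (α + 1)·P ∈ span{N}) if and only if (α − 1 ∈ 𝔟 or α + 1 ∈ 𝔟). That is, α·P ≡ ±P (mod N) if and only if α ≡ ±1 (mod 𝔟). -/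
private lemma key {R : Type*} [CommRing R] [IsDomain R] [IsDedekindDomain R]
    (P N : R) (hN : N ≠ 0) (𝔟 : Ideal R)
    (h : Ideal.span {P, N} * 𝔟 = Ideal.span {N}) (x : R) :
    x * P ∈ Ideal.span ({N} : Set R) ↔ x ∈ 𝔟 := by
  have hP : P ∈ Ideal.span ({P, N} : Set R) :=
    Ideal.subset_span (by simp)
  have hNmem : N ∈ Ideal.span ({P, N} : Set R) :=
    Ideal.subset_span (by simp)
  have h𝔞ne : Ideal.span ({P, N} : Set R) ≠ 0 := by
    intro h0
    rw [h0] at hNmem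
    exact hN (by simpa using hNmem)
  constructor
  · intro hx
    have hle : Ideal.span ({x} : Set R) * Ideal.span ({P, N} : Set R) ≤
        Ideal.span ({P, N} : Set R) * 𝔟 := by
      rw [h]
      rw [Ideal.span_singleton_mul_le_iff]
      intro z hz
      rcases Ideal.mem_span_pair.mp (by simpa using hz) with ⟨a, b, rfl⟩
      have h1 : x * (a * P) ∈ Ideal.span ({N} : Set R) := by
        have := Ideal.mul_mem_left _ a hx
        rw [show a * (x * P) = x * (a * P) by ring] at this
        exact this
      have h2 : x * (b * N) ∈ Ideal.span ({N} : Set R) :=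
        Ideal.mul_mem_left _ _ (Ideal.mul_mem_left _ b (Ideal.mem_span_singleton_self N))
      have := Ideal.add_mem _ h1 h2
      rwa [← mul_add] at this
    have hdvd : 𝔟 ∣ Ideal.span ({x} : Set R) := by
      have : Ideal.span ({P, N} : Set R) * 𝔟 ∣
          Ideal.span ({P, N} : Set R) * Ideal.span ({x} : Set R) := by
        rw [Ideal.dvd_iff_le]
        rwa [mul_comm (Ideal.span ({P, N} : Set R))]
      exact (mul_dvd_mul_iff_left h𝔞ne).mp this
    exact (Ideal.span_singleton_le_iff_mem _).mp (Ideal.le_of_dvd hdvd)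
  · intro hx
    rw [← h]
    rw [mul_comm x P]
    exact Ideal.mul_mem_mul hP hx

theorem stab_gamma1 {R : Type*} [CommRing R] [IsDomain R] [IsDedekindDomain R]
    (P N : R) (hN : N ≠ 0) (𝔟 : Ideal R)
    (h : Ideal.span {P, N} * 𝔟 = Ideal.span {N}) (α : R) :
    ((α - 1) * P ∈ Ideal.span ({N} : Set R) ∨ (α + 1) * P ∈ Ideal.span ({N} : Set R)) ↔
      (α - 1 ∈ 𝔟 ∨ α + 1 ∈ 𝔟) := by
  rw [key P N hN 𝔟 h, key P N hN 𝔟 h]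
end
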